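/- arXiv:1706.06977 — 2 statements merged into one kernel-verified Lean document; each statement's English description precedes it below -/
import Mathlib

section
/- Let g_1, …, g_p be centered Gaussian random variables (not necessarily independent) each with variance at most V > 0, and let |g|^↓_1 ≥ … ≥ |g|^↓_p denote the non-increasing rearrangement of (|g_1|, …, |g_p|). Then P( max_{j=1,…,p} |g|^↓_j / √(V log(2p/j)) ≤ 4 ) ≥ 1/2. -/
open MeasureTheory ProbabilityTheory Matrix

/-- The non-increasing rearrangement of the amplitudes `(|θ 1|, …, |θ p|)`. -/
noncomputable def dsort {p : ℕ} (θ : Fin p → ℝ) : Fin p → ℝ :=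
  fun j => |θ (Tuple.sort (fun i => |θ i|) j.rev)|

/-- The ordered ℓ1 (Slope) norm `‖θ‖_Λ = ∑ j, λ_j |θ|^↓_j`. -/
noncomputable def slopeNorm {p : ℕ} (lam θ : Fin p → ℝ) : ℝ :=
  ∑ j, lam j * dsort θ j

/-- The dual norm of the Slope norm: `‖v‖* = sup_{‖θ‖_Λ ≤ 1} ⟨v, θ⟩`. -/
noncomputable def dualSlopeNorm {p : ℕ} (lam v : Fin p → ℝ) : ℝ :=
  sSup {x : ℝ | ∃ θ : Fin p → ℝ, slopeNorm lam θ ≤ 1 ∧ x = ∑ j, v j * θ j}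

/-- Euclidean norm of a vector. -/
noncomputable def enorm2 {n : ℕ} (v : Fin n → ℝ) : ℝ :=
  Real.sqrt (∑ i, (v i) ^ 2)

/-- Number of nonzero entries. -/
noncomputable def l0 {p : ℕ} (u : Fin p → ℝ) : ℕ := Set.ncard {j | u j ≠ 0}

/-- `Λ(λ, s) = (∑_{j=1}^s λ_j²)^{1/2}` (with 0-based indexing: `j < s`). -/
noncomputable def LamS {p : ℕ} (lam : Fin p → ℝ) (s : ℕ) : ℝ :=
  Real.sqrt (∑ j ∈ Finset.univ.filter (fun j : Fin p => (j : ℕ) < s), (lam j) ^ 2)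

/-- `∑_{j=1}^s λ_j |u|^↓_j` (0-based: indices `j < s`). -/
noncomputable def headSum {p : ℕ} (lam : Fin p → ℝ) (s : ℕ) (u : Fin p → ℝ) : ℝ :=
  ∑ j ∈ Finset.univ.filter (fun j : Fin p => (j : ℕ) < s), lam j * dsort u j

/-- `∑_{j=s+1}^p λ_j |u|^↓_j` (0-based: indices `s ≤ j`). -/
noncomputable def tailSum {p : ℕ} (lam : Fin p → ℝ) (s : ℕ) (u : Fin p → ℝ) : ℝ :=
  ∑ j ∈ Finset.univ.filter (fun j : Fin p => s ≤ (j : ℕ)), lam j * dsort u j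

/-- An undirected graph on the vertex set `[n]` with `p` (distinct) edges,
each edge recorded as an ordered pair `(min, max)`. -/
structure GraphOn (n p : ℕ) where
  edge : Fin p → Fin n × Fin n
  lt : ∀ e, (edge e).1 < (edge e).2
  inj : Function.Injective edge

/-- The edge-vertex incidence matrix `Dᵀ ∈ ℝ^{p × n}`:
`(Dᵀ)_{e,v} = +1` if `v = min(i,j)`, `-1` if `v = max(i,j)`, `0` otherwise. -/
def GraphOn.incT {n p : ℕ} (G : GraphOn n p) : Matrix (Fin p) (Fin n) ℝ :=
  Matrix.of fun e v =>
    if v = (G.edge e).1 then 1 else if v = (G.edge e).2 then -1 else 0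

/-- The simple graph associated to a `GraphOn`. -/
def GraphOn.toSimpleGraph {n p : ℕ} (G : GraphOn n p) : SimpleGraph (Fin n) :=
  SimpleGraph.fromRel fun i j => ∃ e, G.edge e = (i, j)

/-- The compatibility factor `κ(s)`. -/
noncomputable def kappa {n p : ℕ} (G : GraphOn n p) (lam : Fin p → ℝ) (s : ℕ) : ℝ :=
  sInf ((fun v : Fin n → ℝ => enorm2 v / enorm2 (G.incT.mulVec v)) ''
    {v : Fin n → ℝ |
      3 * LamS lam s * enorm2 (G.incT.mulVec v) > tailSum lam s (G.incT.mulVec v)})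

/-- The four Penrose conditions: `B` is the Moore–Penrose pseudo-inverse of `A`. -/
def IsMoorePenrose {m k : ℕ} (A : Matrix (Fin m) (Fin k) ℝ)
    (B : Matrix (Fin k) (Fin m) ℝ) : Prop :=
  A * B * A = A ∧ B * A * B = B ∧ (A * B)ᵀ = A * B ∧ (B * A)ᵀ = B * A

/-- `ρ(G) = max_j ‖(Dᵀ)† e_j‖₂`, where `B = (Dᵀ)†`. -/
noncomputable def rhoG {n p : ℕ} (B : Matrix (Fin n) (Fin p) ℝ) : ℝ :=
  ⨆ j : Fin p, enorm2 (fun i => B i j)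

/-- `P` is the matrix of the orthogonal (Euclidean) projection onto `ker Dᵀ`:
symmetric, idempotent, range contained in the kernel, fixing the kernel. -/
def IsOrthProjKer {n p : ℕ} (G : GraphOn n p) (P : Matrix (Fin n) (Fin n) ℝ) : Prop :=
  Pᵀ = P ∧ P * P = P ∧ (∀ v : Fin n → ℝ, G.incT.mulVec (P.mulVec v) = 0) ∧
    ∀ v : Fin n → ℝ, G.incT.mulVec v = 0 → P.mulVec v = v

/-- The Graph-Slope objective `β ↦ (1/(2n))‖y - β‖² + ‖Dᵀβ‖_Λ`. -/
noncomputable def gslopeObj {n p : ℕ} (G : GraphOn n p) (lam : Fin p → ℝ)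
    (y β : Fin n → ℝ) : ℝ :=
  (1 / (2 * (n : ℝ))) * (enorm2 (y - β)) ^ 2 + slopeNorm lam (G.incT.mulVec β)

/-! Markov's inequality needs no independence: with `S = ∑ᵢ exp (gᵢ² / (4V))`, each summand has
expectation `(1 - v / (2V))^(-1/2) ≤ √2`, so `S < 2√2 p` with probability at least `1/2`.
On that event the `j + 1` largest amplitudes give `(j + 1) exp ((|g|↓ⱼ)² / (4V)) ≤ S`, hence
`(|g|↓ⱼ)² < 4V log (√2 x) ≤ 6V log x` with `x = 2p / (j + 1) ≥ 2`. -/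

open Real Finset
open scoped ENNReal NNReal

section Rearrangement

variable {p : ℕ} (θ : Fin p → ℝ)

lemma dsort_antitone : Antitone (dsort θ) :=
  fun _ _ h => Tuple.monotone_sort (fun i => |θ i|) (Fin.rev_le_rev.mpr h)

lemma sum_comp_dsort (F : ℝ → ℝ) : ∑ j, F (dsort θ j) = ∑ i, F |θ i| :=
  Equiv.sum_comp (Fin.revPerm.trans (Tuple.sort fun i => |θ i|)) (fun i => F |θ i|)

lemma succ_mul_comp_dsort_le_sum {F : ℝ → ℝ} (hF : MonotoneOn F (Set.Ici 0))
    (hF0 : ∀ t, 0 ≤ F t) (j : Fin p) :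
    ((j : ℕ) + 1 : ℝ) * F (dsort θ j) ≤ ∑ i, F |θ i| := by
  rw [← sum_comp_dsort]
  calc ((j : ℕ) + 1 : ℝ) * F (dsort θ j) = ∑ _k ∈ Iic j, F (dsort θ j) := by simp
    _ ≤ ∑ k ∈ Iic j, F (dsort θ k) := sum_le_sum fun k hk =>
        hF (Set.mem_Ici.mpr (abs_nonneg _)) (Set.mem_Ici.mpr (abs_nonneg _))
          (dsort_antitone θ (mem_Iic.mp hk))
    _ ≤ ∑ k, F (dsort θ k) := sum_le_sum_of_subset_of_nonneg (subset_univ _) fun k _ _ => hF0 _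

lemma mul_dsort_sq_lt_log {a c : ℝ} (ha : 0 ≤ a) (hS : ∑ i, exp (a * θ i ^ 2) < c) (j : Fin p) :
    a * dsort θ j ^ 2 < log (c / ((j : ℕ) + 1)) := by
  have hmono : MonotoneOn (fun t => exp (a * t ^ 2)) (Set.Ici 0) := fun s hs t _ hst =>
    exp_le_exp.mpr (mul_le_mul_of_nonneg_left (pow_le_pow_left₀ hs hst 2) ha)
  have hsucc := succ_mul_comp_dsort_le_sum θ hmono (fun t => (exp_pos _).le) j
  simp only [sq_abs] at hsucc
  have hc : 0 < c := (sum_nonneg fun i _ => (exp_pos _).le).trans_lt hS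
  rw [lt_log_iff_exp_lt (by positivity), lt_div_iff₀ (by positivity)]
  linarith

lemma dsort_div_sqrt_log_le {V : ℝ} (hV : 0 < V)
    (hS : ∑ i, exp ((4 * V)⁻¹ * θ i ^ 2) < 2 * √2 * p) (j : Fin p) :
    dsort θ j / √(V * log (2 * p / ((j : ℕ) + 1))) ≤ 4 := by
  set x : ℝ := 2 * p / ((j : ℕ) + 1)
  have hx : 2 ≤ x := by
    have : ((j : ℕ) : ℝ) + 1 ≤ p := by exact_mod_cast j.isLt
    rw [le_div_iff₀ (by positivity)]
    linarith
  have hlogx : log 2 ≤ log x := log_le_log two_pos hx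
  have hbound := mul_dsort_sq_lt_log θ (by positivity) hS j
  have hsplit : log (2 * √2 * p / ((j : ℕ) + 1)) = log 2 / 2 + log x := by
    rw [mul_comm 2 √2, mul_assoc, mul_div_assoc, log_mul (by positivity) (by positivity),
      log_sqrt zero_le_two]
  have hsq : dsort θ j ^ 2 ≤ 4 ^ 2 * (V * log x) := by
    rw [hsplit, inv_mul_eq_div, div_lt_iff₀ (by positivity)] at hbound
    nlinarith [log_pos (by norm_num : (1 : ℝ) < 2)]
  have hpos : 0 < √(V * log x) := sqrt_pos.mpr (mul_pos hV (log_pos (by linarith)))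
  rw [div_le_iff₀ hpos]
  calc dsort θ j = √(dsort θ j ^ 2) := (sqrt_sq (abs_nonneg _)).symm
    _ ≤ √(4 ^ 2 * (V * log x)) := sqrt_le_sqrt hsq
    _ = 4 * √(V * log x) := by rw [sqrt_mul (by positivity), sqrt_sq (by positivity)]

end Rearrangement

lemma lintegral_exp_mul_sq_gaussianReal {v : ℝ≥0} {a : ℝ} (ha : 2 * a * v < 1) :
    ∫⁻ x, ENNReal.ofReal (exp (a * x ^ 2)) ∂gaussianReal 0 v
      = ENNReal.ofReal (√(1 - 2 * a * v))⁻¹ := by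
  rcases eq_or_ne v 0 with rfl | hv
  · simp [gaussianReal_zero_var]
  have hv0 : (0 : ℝ) < v := by positivity
  -- the density times `exp (a x²)` is a centred Gaussian kernel of rate `b`
  set b : ℝ := (2 * (v : ℝ))⁻¹ - a
  have hb : 0 < b := by
    rw [sub_pos, ← one_div, lt_div_iff₀ (by positivity)]
    linarith
  have hprod : ∀ x : ℝ, gaussianPDF 0 v x * ENNReal.ofReal (exp (a * x ^ 2))
      = ENNReal.ofReal ((√(2 * π * v))⁻¹ * exp (-b * x ^ 2)) := by
    intro x
    rw [gaussianPDF, ← ENNReal.ofReal_mul (gaussianPDFReal_nonneg 0 v x), gaussianPDFReal,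
      mul_assoc, ← exp_add]
    congr 3
    simp only [b]
    field_simp
    ring
  rw [gaussianReal_of_var_ne_zero _ hv,
    lintegral_withDensity_eq_lintegral_mul₀ (measurable_gaussianPDF _ _).aemeasurable
      (by fun_prop)]
  simp only [Pi.mul_apply, hprod]
  rw [← ofReal_integral_eq_lintegral_ofReal ((integrable_exp_neg_mul_sq hb).const_mul _)
      (.of_forall fun x => by positivity), integral_const_mul, integral_gaussian]
  rw [← sqrt_inv, ← sqrt_inv, ← sqrt_mul (by positivity)]
  congr 1
  have : 1 - 2 * a * v = 2 * v * b := by simp only [b]; field_simp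
  rw [this]
  field_simp

lemma lintegral_exp_sq_div_four_gaussianReal_le {V : ℝ} (hV : 0 < V) {v : ℝ≥0} (hv : (v : ℝ) ≤ V) :
    ∫⁻ x, ENNReal.ofReal (exp ((4 * V)⁻¹ * x ^ 2)) ∂gaussianReal 0 v ≤ ENNReal.ofReal √2 := by
  have hhalf : 2 * (4 * V)⁻¹ * v ≤ 1 / 2 := by
    rw [show 2 * (4 * V)⁻¹ * (v : ℝ) = v / (2 * V) by field_simp; ring,
      div_le_iff₀ (by positivity)]
    linarith
  rw [lintegral_exp_mul_sq_gaussianReal (by linarith)]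
  refine ENNReal.ofReal_le_ofReal ?_
  calc (√(1 - 2 * (4 * V)⁻¹ * v))⁻¹ ≤ (√(1 / 2))⁻¹ :=
        inv_anti₀ (by positivity) (sqrt_le_sqrt (by linarith))
    _ = √2 := by rw [← sqrt_inv, one_div, inv_inv]

lemma half_le_measure_lt_two_mul {Ω : Type*} [MeasurableSpace Ω] {μ : Measure Ω}
    [IsProbabilityMeasure μ] {f : Ω → ℝ≥0∞} (hf : AEMeasurable f μ) {c : ℝ≥0∞} (hc0 : c ≠ 0)
    (hc : c ≠ ∞) (h : ∫⁻ ω, f ω ∂μ ≤ c) : 1 / 2 ≤ μ {ω | f ω < 2 * c} := by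
  have hmarkov : μ {ω | 2 * c ≤ f ω} ≤ 1 / 2 := by
    refine (meas_ge_le_lintegral_div hf (by simp [hc0]) (by finiteness)).trans
      (ENNReal.div_le_of_le_mul ?_)
    rwa [one_div, ← mul_assoc, ENNReal.inv_mul_cancel two_ne_zero ENNReal.ofNat_ne_top, one_mul]
  have hcompl : {ω | f ω < 2 * c} = {ω | 2 * c ≤ f ω}ᶜ := by ext; simp
  have hnull : NullMeasurableSet {ω | 2 * c ≤ f ω} μ :=
    hf.nullMeasurableSet_preimage measurableSet_Ici
  rw [hcompl, prob_compl_eq_one_sub₀ hnull]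
  calc 1 / 2 = 1 - 1 / 2 := (ENNReal.sub_half ENNReal.one_ne_top).symm
    _ ≤ 1 - μ {ω | 2 * c ≤ f ω} := tsub_le_tsub_left hmarkov 1

lemma aemeasurable_of_map_eq_gaussianReal {Ω : Type*} [MeasurableSpace Ω] {μ : Measure Ω}
    {X : Ω → ℝ} {m : ℝ} {v : ℝ≥0} (h : μ.map X = gaussianReal m v) : AEMeasurable X μ :=
  .of_map_ne_zero (h ▸ IsProbabilityMeasure.ne_zero _)

lemma lintegral_ofReal_sum_exp_sq_le {Ω : Type*} [MeasurableSpace Ω] {μ : Measure Ω} {p : ℕ}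
    {V : ℝ} (hV : 0 < V) {g : Fin p → Ω → ℝ}
    (hg : ∀ j, ∃ v : ℝ≥0, (v : ℝ) ≤ V ∧ μ.map (g j) = gaussianReal 0 v) :
    ∫⁻ ω, ENNReal.ofReal (∑ i, exp ((4 * V)⁻¹ * g i ω ^ 2)) ∂μ ≤ ENNReal.ofReal (√2 * p) := by
  have hF : Measurable fun x : ℝ => ENNReal.ofReal (exp ((4 * V)⁻¹ * x ^ 2)) := by fun_prop
  have hmeas (i : Fin p) : AEMeasurable (g i) μ :=
    aemeasurable_of_map_eq_gaussianReal (hg i).choose_spec.2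
  simp only [ENNReal.ofReal_sum_of_nonneg fun i _ => (exp_pos _).le]
  rw [lintegral_finsetSum' (f := fun i ω => ENNReal.ofReal (exp ((4 * V)⁻¹ * g i ω ^ 2))) _
    fun i _ => hF.comp_aemeasurable (hmeas i)]
  calc ∑ i, ∫⁻ ω, ENNReal.ofReal (exp ((4 * V)⁻¹ * g i ω ^ 2)) ∂μ
      ≤ ∑ _i : Fin p, ENNReal.ofReal √2 := sum_le_sum fun i _ => by
        obtain ⟨v, hv, hmap⟩ := hg i
        rw [← lintegral_map' hF.aemeasurable (hmeas i), hmap]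
        exact lintegral_exp_sq_div_four_gaussianReal_le hV hv
    _ = ENNReal.ofReal (√2 * p) := by simp [ENNReal.ofReal_mul, mul_comm]

theorem statement_12_general {p : ℕ}
    {Ω : Type} [MeasurableSpace Ω] (μ : Measure Ω) [IsProbabilityMeasure μ]
    (V : ℝ) (hV : 0 < V) (g : Fin p → Ω → ℝ)
    (hg : ∀ j, ∃ v : NNReal, (v : ℝ) ≤ V ∧ Measure.map (g j) μ = gaussianReal 0 v) :
    1 / 2 ≤
      μ {ω | ∀ j : Fin p,
        dsort (fun j' => g j' ω) j /
            Real.sqrt (V * Real.log (2 * (p : ℝ) / ((j : ℕ) + 1))) ≤ 4} := by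
  rcases p.eq_zero_or_pos with rfl | hp
  · simp
  have hmeas (i : Fin p) : AEMeasurable (g i) μ :=
    aemeasurable_of_map_eq_gaussianReal (hg i).choose_spec.2
  refine (half_le_measure_lt_two_mul (by fun_prop) (by positivity) ENNReal.ofReal_ne_top
    (lintegral_ofReal_sum_exp_sq_le hV hg)).trans
    (measure_mono fun ω hω j => dsort_div_sqrt_log_le _ hV ?_ j)
  rw [Set.mem_ofPred_eq, ← ENNReal.ofReal_ofNat 2, ← ENNReal.ofReal_mul zero_le_two,
    ENNReal.ofReal_lt_ofReal_iff (by positivity)] at hω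
  linarith

/-- concentration of the non-increasing rearrangement of Gaussian
amplitudes (Proposition E.2 of Bellec–Lecué–Tsybakov). -/
theorem statement_12 {p : ℕ} (hp : 0 < p)
    {Ω : Type} [MeasurableSpace Ω] (μ : Measure Ω) [IsProbabilityMeasure μ]
    (V : ℝ) (hV : 0 < V) (g : Fin p → Ω → ℝ)
    (hg : ∀ j, ∃ v : NNReal, (v : ℝ) ≤ V ∧ Measure.map (g j) μ = gaussianReal 0 v) :
    1 / 2 ≤
      μ {ω | ∀ j : Fin p,
        dsort (fun j' => g j' ω) j /
            Real.sqrt (V * Real.log (2 * (p : ℝ) / ((j : ℕ) + 1))) ≤ 4} :=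
  statement_12_general μ V hV g hg
end

section
/- Let λ_1 ≥ λ_2 ≥ … ≥ λ_p > 0 and let ‖·‖* denote the dual norm of the ordered ℓ1 norm ‖·‖_Λ. Then for every x ∈ ℝ^p, ‖x‖* ≤ max_{j=1,…,p} |x|^↓_j / λ_j, where |x|^↓_1 ≥ … ≥ |x|^↓_p is the non-increasing rearrangement of (|x_1|,…,|x_p|). -/
open MeasureTheory ProbabilityTheory Matrix

lemma dsort_nonneg {p : ℕ} (u : Fin p → ℝ) (j : Fin p) : 0 ≤ dsort u j := abs_nonneg _

lemma dsort_antitone_s14 {p : ℕ} (u : Fin p → ℝ) : Antitone (dsort u) := by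
  intro i j hij
  have := Tuple.monotone_sort (fun i => |u i|) (Fin.rev_le_rev.2 hij)
  simpa [dsort, Function.comp] using this

lemma dsort_apply_perm {p : ℕ} (u : Fin p → ℝ) (i : Fin p) :
    dsort u ((Tuple.sort (fun i => |u i|))⁻¹ i).rev = |u i| := by
  simp [dsort]

/-- bound on the dual Slope norm by the max of rearranged ratios. -/
theorem statement_14 {p : ℕ} (hp : 0 < p) (lam : Fin p → ℝ)
    (hmono : Antitone lam) (hpos : ∀ j, 0 < lam j) (x : Fin p → ℝ) :
    dualSlopeNorm lam x ≤
      Finset.univ.sup' (Finset.univ_nonempty_iff.mpr ⟨⟨0, hp⟩⟩)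
        (fun j => dsort x j / lam j) := by
  set M := Finset.univ.sup' (Finset.univ_nonempty_iff.mpr ⟨⟨0, hp⟩⟩)
      (fun j => dsort x j / lam j) with hM
  have hM0 : 0 ≤ M := le_trans (div_nonneg (dsort_nonneg x _) (hpos ⟨0, hp⟩).le)
    (Finset.le_sup' (fun j => dsort x j / lam j) (Finset.mem_univ (⟨0, hp⟩ : Fin p)))
  have hMj : ∀ j, dsort x j ≤ M * lam j := by
    intro j
    have h1 : dsort x j / lam j ≤ M := Finset.le_sup' (fun j => dsort x j / lam j) (Finset.mem_univ j)
    exact (div_le_iff₀ (hpos j)).1 h1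
  apply csSup_le
  · exact ⟨0, 0, by simp [slopeNorm, dsort], by simp⟩
  · rintro y ⟨θ, hθ, rfl⟩
    set sθ : Equiv.Perm (Fin p) := Tuple.sort (fun i => |θ i|) with hsθ
    set sx : Equiv.Perm (Fin p) := Tuple.sort (fun i => |x i|) with hsx
    set e : Equiv.Perm (Fin p) := Fin.revPerm.trans sθ with he
    have step1 : ∑ j, x j * θ j ≤ ∑ j, |x j| * |θ j| := by
      apply Finset.sum_le_sum
      intro i _
      rw [← abs_mul]
      exact le_abs_self _
    have step2 : ∑ j, |x j| * |θ j| = ∑ j, dsort θ j * |x (e j)| := by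
      rw [← Equiv.sum_comp e (fun j => |x j| * |θ j|)]
      exact Finset.sum_congr rfl fun j _ => mul_comm _ _
    set π : Equiv.Perm (Fin p) := e.trans (sx⁻¹.trans Fin.revPerm) with hπ
    have step3 : ∀ j, |x (e j)| = dsort x (π j) := by
      intro j
      simp [dsort, hπ, hsx]
    have hmv : Monovary (dsort θ) (dsort x) :=
      (dsort_antitone_s14 θ).monovary (dsort_antitone_s14 x)
    have step4 : ∑ j, dsort θ j * dsort x (π j) ≤ ∑ j, dsort θ j * dsort x j := by
      simpa [smul_eq_mul] using hmv.sum_smul_comp_perm_le_sum_smul (σ := π)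
    have step5 : ∑ j, dsort θ j * dsort x j ≤ M * slopeNorm lam θ := by
      rw [slopeNorm, Finset.mul_sum]
      apply Finset.sum_le_sum
      intro j _
      calc dsort θ j * dsort x j ≤ dsort θ j * (M * lam j) :=
            mul_le_mul_of_nonneg_left (hMj j) (dsort_nonneg θ j)
      _ = M * (lam j * dsort θ j) := by ring
    calc ∑ j, x j * θ j ≤ ∑ j, dsort θ j * |x (e j)| := step1.trans step2.le
    _ = ∑ j, dsort θ j * dsort x (π j) := by simp_rw [step3]
    _ ≤ M * slopeNorm lam θ := step4.trans step5
    _ ≤ M * 1 := mul_le_mul_of_nonneg_left hθ hM0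
    _ = M := mul_one M
end
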